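/- Let N be a positive integer. Then for every τ ∈ ℍ, with q = e^{2πiτ}: (N/(2πi))·( N·η′(Nτ)/η(Nτ) − η′(τ)/η(τ) ) = N(N−1)/24 + N·∑_{k≥1} σ₁(k)(q^k − N·q^{Nk}), where η′ denotes the complex derivative of η. That is, the weight-two form Λ_N(τ) = N·q(d/dq)log(η(Nτ)/η(τ)) has the stated Lambert-type q-expansion. -/

import Mathlib

/-- `q = e^{2πiτ}`. -/
noncomputable def qc (τ : ℂ) : ℂ := Complex.exp (2 * Real.pi * Complex.I * τ)

/-- The Dedekind eta function `η(τ) = e^{πiτ/12} ∏_{n ≥ 1} (1 - q^n)`. -/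
noncomputable def eta (τ : ℂ) : ℂ :=
  Complex.exp (Real.pi * Complex.I * τ / 12) * ∏' n : ℕ, (1 - qc τ ^ (n + 1))

/-- `σ₁(k)`, the sum of the divisors of `k`. -/
def sigma1 (k : ℕ) : ℕ := ∑ d ∈ k.divisors, d

/-! The logarithmic derivative of `η` is `(πi/12) E₂`, and `E₂ = 1 - 24 ∑ σ₁(n) qⁿ`.
Evaluating at `τ` and at `Nτ`, where the nome is `q^N`, the constant terms combine to
`N(N-1)/24` and the divisor sums to the stated Lambert series. -/

open Complex hiding eta
open ArithmeticFunction
open scoped Real ArithmeticFunction.sigma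

lemma qc_eq_qParam : qc = Function.Periodic.qParam 1 := by
  ext z
  simp [qc, Function.Periodic.qParam]

lemma eta_eq_modularFormEta : eta = ModularForm.eta := by
  ext z
  simp only [eta, ModularForm.eta, ModularForm.eta_q, qc_eq_qParam, Function.Periodic.qParam]
  congr 2
  push_cast
  ring

lemma sigma1_eq_sigma_one (k : ℕ) : sigma1 k = σ 1 k := (sigma_one_apply k).symm

lemma qc_natCast_mul (N : ℕ) (τ : ℂ) : qc (N * τ) = qc τ ^ N := by
  rw [qc, qc, ← Complex.exp_nat_mul]
  ring_nf

lemma summable_sigma1_mul_qc_pow {z : ℂ} (hz : 0 < z.im) :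
    Summable fun k : ℕ ↦ (sigma1 (k + 1) : ℂ) * qc z ^ (k + 1) := by
  simpa [sigma1_eq_sigma_one, qc] using (summable_nat_add_iff 1).mpr
    (EisensteinSeries.summable_sigma_mul_cexp_pow (k := 2) one_le_two ⟨z, hz⟩)

lemma deriv_eta_div_eta {z : ℂ} (hz : 0 < z.im) :
    deriv eta z / eta z =
      π * I / 12 * (1 - 24 * ∑' k : ℕ, (sigma1 (k + 1) : ℂ) * qc z ^ (k + 1)) := by
  have h := ModularForm.logDeriv_eta_eq_E2 ⟨z, hz⟩
  rw [EisensteinSeries.E2_eq_tsum_cexp,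
    tsum_pnat_eq_tsum_succ (f := fun n ↦ (σ 1 n : ℂ) * _ ^ n)] at h
  rw [eta_eq_modularFormEta, ← logDeriv_apply]
  simpa [sigma1_eq_sigma_one, qc] using h

/-- the Lambert-type `q`-expansion of
`Λ_N(τ) = N·q(d/dq)log(η(Nτ)/η(τ))`:
`(N/(2πi))(N·η′(Nτ)/η(Nτ) - η′(τ)/η(τ)) = N(N-1)/24 + N∑_{k≥1}σ₁(k)(q^k - Nq^{Nk})`. -/
theorem stmt_9 (N : ℕ) (hN : 0 < N) (τ : ℂ) (hτ : 0 < τ.im) :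
    (N : ℂ) / (2 * Real.pi * Complex.I) *
        ((N : ℂ) * deriv eta ((N : ℂ) * τ) / eta ((N : ℂ) * τ) - deriv eta τ / eta τ) =
      (N : ℂ) * ((N : ℂ) - 1) / 24 +
        (N : ℂ) * ∑' k : ℕ, (sigma1 (k + 1) : ℂ) *
          (qc τ ^ (k + 1) - (N : ℂ) * qc τ ^ (N * (k + 1))) := by
  have hNτ : 0 < ((N : ℂ) * τ).im := by simpa using mul_pos (Nat.cast_pos.2 hN) hτ
  have hqN (k : ℕ) : qc ((N : ℂ) * τ) ^ (k + 1) = qc τ ^ (N * (k + 1)) := by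
    rw [qc_natCast_mul, pow_mul]
  have hsummableN := summable_sigma1_mul_qc_pow hNτ
  simp only [hqN] at hsummableN
  simp_rw [mul_sub, mul_left_comm _ (N : ℂ) _]
  rw [Summable.tsum_sub (summable_sigma1_mul_qc_pow hτ) (hsummableN.mul_left _), tsum_mul_left,
    mul_div_assoc, deriv_eta_div_eta hτ, deriv_eta_div_eta hNτ]
  simp only [hqN]
  field_simp
  ring
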